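/- (Chakiri's Lemma) Let g = g₁ g₂ ⋯ g_k be a factorized expression in a group H. Then the factorization (g₁,…,g_k) is invariant under gᵐ for every integer m; that is, the termwise conjugate (g⁻ᵐ g₁ gᵐ, …, g⁻ᵐ g_k gᵐ) is Hurwitz equivalent to (g₁,…,g_k). -/

import Mathlib

/-- A single Hurwitz move: replace an adjacent pair `(a, b)` in a tuple by
`(a * b * a⁻¹, a)`, leaving the other entries unchanged. -/
def HurwitzMove {G : Type*} [Group G] (L L' : List G) : Prop :=
  ∃ (l₁ l₂ : List G) (a b : G),
    L = l₁ ++ a :: b :: l₂ ∧ L' = l₁ ++ (a * b * a⁻¹) :: a :: l₂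

/-- Two tuples are Hurwitz equivalent if one is obtained from the other by a
finite sequence of Hurwitz moves and inverses of Hurwitz moves. -/
def HurwitzEquiv {G : Type*} [Group G] : List G → List G → Prop :=
  Relation.EqvGen HurwitzMove

/-- A tuple `(g₁, …, g_k)` is invariant under `h` if its termwise conjugate
`(h⁻¹g₁h, …, h⁻¹g_kh)` is Hurwitz equivalent to `(g₁, …, g_k)`. -/
def HurwitzInvariant {G : Type*} [Group G] (L : List G) (h : G) : Prop :=
  HurwitzEquiv (L.map fun g => h⁻¹ * g * h) L

/-! Moving the first entry `a` of a tuple with product `g` past all the others, one inverse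
Hurwitz move at a time, brings it to the end as `g⁻¹ a g` while keeping the product `g`;
doing this for every entry shows that the tuple is invariant under its own product. The
elements under which a tuple is invariant form a subgroup, which therefore contains every
power `gᵐ`. -/

theorem Relation.EqvGen.map {α β : Type*} {r : α → α → Prop} {s : β → β → Prop}
    (f : α → β) (hf : ∀ a b, r a b → s (f a) (f b)) {a b : α} (h : EqvGen r a b) :
    EqvGen s (f a) (f b) := by
  induction h with
  | rel a b hab => exact .rel _ _ (hf a b hab)
  | refl a => exact .refl _
  | symm a b _ ih => exact .symm _ _ ih
  | trans a b c _ _ ih₁ ih₂ => exact .trans _ _ _ ih₁ ih₂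

section Hurwitz

variable {G K : Type*} [Group G] [Group K]

local infix:50 " ≈ₕ " => HurwitzEquiv

namespace HurwitzMove

theorem cons (c : G) {l l' : List G} (h : HurwitzMove l l') :
    HurwitzMove (c :: l) (c :: l') := by
  obtain ⟨l₁, l₂, a, b, rfl, rfl⟩ := h
  exact ⟨c :: l₁, l₂, a, b, rfl, rfl⟩

theorem map (f : G →* K) {l l' : List G} (h : HurwitzMove l l') :
    HurwitzMove (l.map f) (l'.map f) := by
  obtain ⟨l₁, l₂, a, b, rfl, rfl⟩ := h
  exact ⟨l₁.map f, l₂.map f, f a, f b, by simp, by simp⟩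

end HurwitzMove

namespace HurwitzEquiv

theorem refl (l : List G) : l ≈ₕ l := Relation.EqvGen.refl l

theorem symm {l l' : List G} (h : l ≈ₕ l') : l' ≈ₕ l := Relation.EqvGen.symm _ _ h

theorem trans {l l' l'' : List G} (h : l ≈ₕ l') (h' : l' ≈ₕ l'') : l ≈ₕ l'' :=
  Relation.EqvGen.trans _ _ _ h h'

instance : Trans (α := List G) HurwitzEquiv HurwitzEquiv HurwitzEquiv :=
  ⟨fun h h' => h.trans h'⟩

theorem of_move {l l' : List G} (h : HurwitzMove l l') : l ≈ₕ l' := Relation.EqvGen.rel _ _ h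

theorem cons (c : G) {l l' : List G} (h : l ≈ₕ l') : c :: l ≈ₕ c :: l' :=
  Relation.EqvGen.map (r := HurwitzMove) (s := HurwitzMove) _ (fun _ _ => HurwitzMove.cons c) h

theorem map (f : G →* K) {l l' : List G} (h : l ≈ₕ l') : l.map f ≈ₕ l'.map f :=
  Relation.EqvGen.map (r := HurwitzMove) (s := HurwitzMove) _ (fun _ _ => HurwitzMove.map f) h

theorem map_conj (h : G) {l l' : List G} (he : l ≈ₕ l') :
    (l.map fun x => h⁻¹ * x * h) ≈ₕ (l'.map fun x => h⁻¹ * x * h) :=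
  he.map (MonoidHom.mk' (fun x => h⁻¹ * x * h) fun _ _ => by group)

theorem cons_equiv_append_conj_prod (a : G) (T : List G) :
    a :: T ≈ₕ T ++ [T.prod⁻¹ * a * T.prod] := by
  induction T generalizing a with
  | nil => simpa using refl [a]
  | cons b T ih =>
    have hmove : HurwitzMove (b :: (b⁻¹ * a * b) :: T) (a :: b :: T) :=
      ⟨[], T, b, b⁻¹ * a * b, rfl, by simp [mul_assoc]⟩
    calc a :: b :: T ≈ₕ b :: (b⁻¹ * a * b) :: T := (of_move hmove).symm
      _ ≈ₕ b :: (T ++ [T.prod⁻¹ * (b⁻¹ * a * b) * T.prod]) := (ih _).cons b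
      _ = (b :: T) ++ [(b :: T).prod⁻¹ * a * (b :: T).prod] := by simp [mul_assoc]

theorem append_equiv_append_map_conj {g : G} (A B : List G) (hAB : (A ++ B).prod = g) :
    A ++ B ≈ₕ B ++ (A.map fun x => g⁻¹ * x * g) := by
  induction A generalizing B with
  | nil => simpa using refl B
  | cons a A ih =>
    have hconj : (A ++ B).prod⁻¹ * a * (A ++ B).prod = g⁻¹ * a * g := by
      rw [← hAB, List.cons_append, List.prod_cons]; group
    calc a :: (A ++ B) ≈ₕ A ++ (B ++ [g⁻¹ * a * g]) := by
          simpa only [hconj, List.append_assoc] using cons_equiv_append_conj_prod a (A ++ B)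
      _ ≈ₕ B ++ [g⁻¹ * a * g] ++ (A.map fun x => g⁻¹ * x * g) :=
          ih _ (by simp [← hAB, mul_assoc])
      _ = B ++ ((a :: A).map fun x => g⁻¹ * x * g) := by simp

end HurwitzEquiv

theorem hurwitzInvariant_prod (L : List G) : HurwitzInvariant L L.prod := by
  simpa [HurwitzInvariant] using (HurwitzEquiv.append_equiv_append_map_conj L [] (by simp)).symm

def hurwitzStabilizer (L : List G) : Subgroup G where
  carrier := {h | HurwitzInvariant L h}
  one_mem' := by simpa [HurwitzInvariant] using HurwitzEquiv.refl L
  mul_mem' {h k} hh hk := by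
    have hmap : (L.map fun x => (h * k)⁻¹ * x * (h * k)) =
        (L.map fun x => h⁻¹ * x * h).map fun x => k⁻¹ * x * k := by
      simp [mul_assoc]
    change _ ≈ₕ L
    rw [hmap]
    exact (hh.map_conj k).trans hk
  inv_mem' {h} hh := by
    have hmap : ((L.map fun x => h⁻¹ * x * h).map fun x => h⁻¹⁻¹ * x * h⁻¹) = L := by
      simp [Function.comp_def, mul_assoc]
    change _ ≈ₕ L
    simpa only [hmap] using (hh.map_conj h⁻¹).symm

end Hurwitz

/-- Chakiri's Lemma: a factorization `g = g₁ ⋯ g_k` is invariant under `gᵐ`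
for every integer `m`: the termwise conjugate of the tuple by `gᵐ` is Hurwitz
equivalent to the tuple itself. -/
theorem chakiri {H : Type*} [Group H] (L : List H) (g : H) (hg : g = L.prod)
    (m : ℤ) : HurwitzEquiv (L.map fun x => (g ^ m)⁻¹ * x * g ^ m) L :=
  zpow_mem (show g ∈ hurwitzStabilizer L from hg ▸ hurwitzInvariant_prod L) m
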